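/- Let n = 2n' be even. In MHRG(2,2n'), T(Y_{2,2n'}) = F(Y_{2,2n'}) ∖ {(λ₁',λ₂') ∈ F(Y_{2,2n'}) : λ₁' + λ₂' = 2n'}. Moreover, for Y = (λ₁,λ₂) ∈ F(Y_{2,2n'}), setting OH(Y) := {(λ₁',λ₂) : λ₂ ≤ λ₁' < λ₁} ∪ {(λ₁,λ₂') : 0 ≤ λ₂' < λ₂} ∪ {(λ₂−1,λ₁') : 0 ≤ λ₁' < λ₂}: (1) if λ₁ + λ₂ < 2n', then O(Y) = OH(Y); (2) if λ₁ + λ₂ > 2n', then O(Y) = (OH(Y) ∖ {(λ₁',λ₂') : λ₁' + λ₂' = 2n'}) ∪ {(2n'−λ₂, 2n'−λ₁)}. -/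

import Mathlib

open Finset

/-- The rectangular Young diagram `Y_{m,n}` (boxes are 1-based pairs `(i,j)`). -/
def rect (m n : ℕ) : Finset (ℕ × ℕ) := Finset.Icc 1 m ×ˢ Finset.Icc 1 n

/-- `Y` is a Young diagram: a finite set of 1-based boxes, downward closed. -/
def IsYD (Y : Finset (ℕ × ℕ)) : Prop :=
  (∀ p ∈ Y, 1 ≤ p.1 ∧ 1 ≤ p.2) ∧
  (∀ p ∈ Y, ∀ q : ℕ × ℕ, 1 ≤ q.1 → 1 ≤ q.2 → q.1 ≤ p.1 → q.2 ≤ p.2 → q ∈ Y)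

/-- `d_k(Y)`: the number of boxes of `Y` on the `k`-th diagonal `j - i = k`. -/
def dk (Y : Finset (ℕ × ℕ)) (k : ℤ) : ℤ :=
  ((Y.filter fun p => (p.2 : ℤ) - (p.1 : ℤ) = k).card : ℤ)

/-- The set `D_{m,n}` of diagonal sequences: non-negative, vanishing outside
`(-m, n)`, and satisfying the adjacency condition. -/
def Dseq (m n : ℕ) (a : ℤ → ℤ) : Prop :=
  (∀ k : ℤ, 0 ≤ a k) ∧
  (∀ k : ℤ, k ≤ -(m : ℤ) → a k = 0) ∧
  (∀ k : ℤ, (n : ℤ) ≤ k → a k = 0) ∧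
  (∀ i : ℤ, -(m : ℤ) < i → i ≤ 0 → a (i - 1) ≤ a i ∧ a i ≤ a (i - 1) + 1) ∧
  (∀ i : ℤ, 0 < i → i ≤ (n : ℤ) → a i ≤ a (i - 1) ∧ a (i - 1) ≤ a i + 1)

/-- `a_{[l,r]}`: subtract `1` from the components indexed by `l ≤ k ≤ r`. -/
def cut (a : ℤ → ℤ) (l r : ℤ) : ℤ → ℤ := fun k => if l ≤ k ∧ k ≤ r then a k - 1 else a k

/-- The pair `(x,y)` sitting at positions `(k-1,k)` satisfies the adjacency condition. -/
def adjPair (k x y : ℤ) : Prop := if k ≤ 0 then x ≤ y ∧ y ≤ x + 1 else y ≤ x ∧ x ≤ y + 1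

/-- `(a_{k-1}, a_k)` is a left bulge, `a_{k-1} ↘ a_k`. -/
def leftBulge (a : ℤ → ℤ) (k : ℤ) : Prop :=
  adjPair k (a (k - 1)) (a k) ∧ adjPair k (a (k - 1) - 1) (a k)

/-- `(a_{k-1}, a_k)` is a right bulge, `a_{k-1} ↗ a_k`. -/
def rightBulge (a : ℤ → ℤ) (k : ℤ) : Prop :=
  adjPair k (a (k - 1)) (a k) ∧ adjPair k (a (k - 1)) (a k - 1)

/-- The map `E` duplicating the `c`-th component of a sequence. -/
def Emap (c : ℤ) (a : ℤ → ℤ) : ℤ → ℤ := fun k => if k ≤ c then a k else a (k - 1)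

def el (c k : ℤ) : ℤ := if k ≤ c then k else k + 1

def er (c k : ℤ) : ℤ := if k < c then k else k + 1

/-- The unimodal numbering `α_{m,n}(i,j) = min (j-i+m) (i-j+n)`. -/
def unimodal (m n : ℕ) (p : ℕ × ℕ) : ℤ :=
  min ((p.2 : ℤ) - (p.1 : ℤ) + m) ((p.1 : ℤ) - (p.2 : ℤ) + n)

/-- `A(X)`: the multiset of unimodal numbers of the boxes of `X`. -/
def Amul (m n : ℕ) (X : Finset (ℕ × ℕ)) : Multiset ℤ := X.val.map (unimodal m n)

/-- The hook of the box `(i,j)` in `Y`. -/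
def hook (Y : Finset (ℕ × ℕ)) (i j : ℕ) : Finset (ℕ × ℕ) :=
  Y.filter fun p => (p.1 = i ∧ j ≤ p.2) ∨ (p.2 = j ∧ i ≤ p.1)

/-- After removing the hook of `(i,j)`, boxes strictly south-east of `(i,j)` move
up-left by one step. -/
def shiftBox (i j : ℕ) (p : ℕ × ℕ) : ℕ × ℕ :=
  if i < p.1 ∧ j < p.2 then (p.1 - 1, p.2 - 1) else p

/-- The Young diagram `Y ∖ h_Y(i,j)` obtained by removing the hook of `(i,j)`. -/
def removeHook (Y : Finset (ℕ × ℕ)) (i j : ℕ) : Finset (ℕ × ℕ) :=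
  (Y \ hook Y i j).image (shiftBox i j)

/-- One move of MHRG(m,n): remove a hook; if the resulting diagram has a hook with
the same multiset of unimodal numbers, one such hook must also be removed
(this second removal happens at most once). -/
def Move (m n : ℕ) (Y Y' : Finset (ℕ × ℕ)) : Prop :=
  ∃ i j : ℕ, (i, j) ∈ Y ∧
    ((Y' = removeHook Y i j ∧
        ¬∃ i' j' : ℕ, (i', j') ∈ removeHook Y i j ∧
          Amul m n (hook (removeHook Y i j) i' j') = Amul m n (hook Y i j)) ∨
      (∃ i' j' : ℕ, (i', j') ∈ removeHook Y i j ∧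
        Amul m n (hook (removeHook Y i j) i' j') = Amul m n (hook Y i j) ∧
        Y' = removeHook (removeHook Y i j) i' j'))

/-- `T(Y_{m,n})`: the positions of MHRG(m,n) reachable from the starting position. -/
def Reach (m n : ℕ) (Y : Finset (ℕ × ℕ)) : Prop :=
  Relation.ReflTransGen (Move m n) (rect m n) Y

/-- `O(Y)`: the set of options of a position `Y` in MHRG(m,n). -/
def Opt (m n : ℕ) (Y : Finset (ℕ × ℕ)) : Set (Finset (ℕ × ℕ)) := {Y' | Move m n Y Y'}

lemma card_removeHook_lt (Y : Finset (ℕ × ℕ)) (i j : ℕ) (h : (i, j) ∈ Y) :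
    (removeHook Y i j).card < Y.card := by
  have hsub : hook Y i j ⊆ Y := Finset.filter_subset _ _
  have hmem : (i, j) ∈ hook Y i j :=
    Finset.mem_filter.mpr ⟨h, Or.inl ⟨rfl, le_rfl⟩⟩
  have h1 : (removeHook Y i j).card ≤ (Y \ hook Y i j).card := Finset.card_image_le
  have h2 : (Y \ hook Y i j).card = Y.card - (hook Y i j).card := by
    rw [Finset.card_sdiff, Finset.inter_eq_left.mpr hsub]
  have h3 : 0 < (hook Y i j).card := Finset.card_pos.mpr ⟨_, hmem⟩
  have h4 : (hook Y i j).card ≤ Y.card := Finset.card_le_card hsub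
  omega

lemma move_card_lt {m n : ℕ} {Y Y' : Finset (ℕ × ℕ)} (h : Move m n Y Y') :
    Y'.card < Y.card := by
  obtain ⟨i, j, hij, hc⟩ := h
  rcases hc with ⟨rfl, -⟩ | ⟨i', j', hij', -, rfl⟩
  · exact card_removeHook_lt Y i j hij
  · exact (card_removeHook_lt _ i' j' hij').trans (card_removeHook_lt Y i j hij)

/-- The minimal excludant. -/
noncomputable def mex (s : Set ℕ) : ℕ := sInf {k | k ∉ s}

/-- The Grundy value of a position of MHRG(m,n). -/
noncomputable def grundy (m n : ℕ) (Y : Finset (ℕ × ℕ)) : ℕ :=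
  mex {g : ℕ | ∃ Y', ∃ _ : Move m n Y Y', grundy m n Y' = g}
termination_by Y.card
decreasing_by exact move_card_lt (by assumption)

/-- The two-row Young diagram `(λ₁, λ₂)`. -/
def tworow (a b : ℕ) : Finset (ℕ × ℕ) :=
  ({1} : Finset ℕ) ×ˢ Finset.Icc 1 a ∪ ({2} : Finset ℕ) ×ˢ Finset.Icc 1 b

/-- `S` is a shifted Young diagram: rows are intervals `[i, λ_i]` with `λ` strictly
decreasing. -/
def IsShifted (S : Finset (ℕ × ℕ)) : Prop :=
  (∀ p ∈ S, 1 ≤ p.1 ∧ p.1 ≤ p.2) ∧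
  (∀ p ∈ S, ∀ j' : ℕ, p.1 ≤ j' → j' ≤ p.2 → (p.1, j') ∈ S) ∧
  (∀ p ∈ S, 2 ≤ p.1 → (p.1 - 1, p.2 + 1) ∈ S)

/-- The shifted Young diagram of a (strictly decreasing, positive) list of row lengths. -/
def shiftedOf (l : List ℕ) : Finset (ℕ × ℕ) :=
  (Finset.range l.length).biUnion fun i =>
    ({i + 1} : Finset ℕ) ×ˢ Finset.Icc (i + 1) (l.getD i 0)

/-- The staircase `S_n = (n, n-1, …, 1)`. -/
def staircase (n : ℕ) : List ℕ := (List.range n).map fun i => n - i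

/-- The shifted hook of the box `(i,j)` in `S` (box, arm, leg and tail). -/
def shook (S : Finset (ℕ × ℕ)) (i j : ℕ) : Finset (ℕ × ℕ) :=
  S.filter fun p => (p.1 = i ∧ j ≤ p.2) ∨ (p.2 = j ∧ i ≤ p.1) ∨ (p.1 = j + 1 ∧ j < p.2)

/-- The shifting of boxes performed after removing the shifted hook of `(i,j)`. -/
def sShiftBox (i j : ℕ) (p : ℕ × ℕ) : ℕ × ℕ :=
  if i < p.1 ∧ p.1 < j + 1 ∧ j < p.2 then (p.1 - 1, p.2 - 1)
  else if j + 1 < p.1 then (p.1 - 2, p.2 - 2)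
  else p

/-- The shifted Young diagram obtained by removing the shifted hook of `(i,j)`. -/
def sRemoveHook (S : Finset (ℕ × ℕ)) (i j : ℕ) : Finset (ℕ × ℕ) :=
  (S \ shook S i j).image (sShiftBox i j)

/-- One move of HRG on shifted Young diagrams: remove one hook. -/
def SMove (S S' : Finset (ℕ × ℕ)) : Prop :=
  ∃ i j : ℕ, (i, j) ∈ S ∧ S' = sRemoveHook S i j

lemma card_sRemoveHook_lt (S : Finset (ℕ × ℕ)) (i j : ℕ) (h : (i, j) ∈ S) :
    (sRemoveHook S i j).card < S.card := by
  have hsub : shook S i j ⊆ S := Finset.filter_subset _ _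
  have hmem : (i, j) ∈ shook S i j :=
    Finset.mem_filter.mpr ⟨h, Or.inl ⟨rfl, le_rfl⟩⟩
  have h1 : (sRemoveHook S i j).card ≤ (S \ shook S i j).card := Finset.card_image_le
  have h2 : (S \ shook S i j).card = S.card - (shook S i j).card := by
    rw [Finset.card_sdiff, Finset.inter_eq_left.mpr hsub]
  have h3 : 0 < (shook S i j).card := Finset.card_pos.mpr ⟨_, hmem⟩
  have h4 : (shook S i j).card ≤ S.card := Finset.card_le_card hsub
  omega

lemma smove_card_lt {S S' : Finset (ℕ × ℕ)} (h : SMove S S') : S'.card < S.card := by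
  obtain ⟨i, j, hij, rfl⟩ := h
  exact card_sRemoveHook_lt S i j hij

/-- The Grundy value of a position of HRG on shifted Young diagrams. -/
noncomputable def sgrundy (S : Finset (ℕ × ℕ)) : ℕ :=
  mex {g : ℕ | ∃ S', ∃ _ : SMove S S', sgrundy S' = g}
termination_by S.card
decreasing_by exact smove_card_lt (by assumption)

/-- `OH(Y)` for a two-row diagram `Y = (λ₁,λ₂)`: the results of single hook removals. -/
def OH (l1 l2 : ℕ) : Set (Finset (ℕ × ℕ)) :=
  {Y | ∃ a : ℕ, l2 ≤ a ∧ a < l1 ∧ Y = tworow a l2} ∪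
  {Y | ∃ b : ℕ, b < l2 ∧ Y = tworow l1 b} ∪
  {Y | ∃ a : ℕ, a < l2 ∧ Y = tworow (l2 - 1) a}

/-!
Encode a two-row diagram `(λ₁, λ₂)` by its beta-set `{λ₁ + 1, λ₂}`, reading box `(1, j)` at
position `j + 1` and box `(2, j)` at position `j`. Removing a hook moves one bead from `q` down to
a free position `r`, and the unimodal numbers of the hook are the values of the tent function
`k ↦ min k (2n' + 2 - k)` on the positions `r + 1, …, q`. Two such multisets agree only for equal
intervals or for intervals mirrored by `k ↦ 2n' + 2 - k`. Hence a second removal is forced exactly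
when the first one leaves a bead set symmetric under `σ k = 2n' + 1 - k`, i.e. `λ₁ + λ₂ = 2n'`;
as `2n' + 1` is odd no bead is fixed by `σ`, so the second removal is the `σ`-mirror of the first
and the whole move replaces the bead set by its `σ`-image. Symmetric positions are therefore never
reached, and every other position is reached by moving the two beads of `Y_{2,2n'}` directly to
their targets, or to the `σ`-images of their targets followed by one reflecting move.
-/
def tent (c k : ℕ) : ℤ := min (k : ℤ) (2 * c - k)

def tentSeg (c p q : ℕ) : Multiset ℤ := (Icc p q).val.map (tent c)

section Tent

variable {c p q p' q' : ℕ}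

lemma tent_eq_tent_iff {j k : ℕ} (hk : k ≤ 2 * c) :
    tent c j = tent c k ↔ j = k ∨ j = 2 * c - k := by
  unfold tent
  omega

lemma tent_two_mul_sub {k : ℕ} (hk : k ≤ 2 * c) : tent c (2 * c - k) = tent c k :=
  (tent_eq_tent_iff hk).2 (Or.inr rfl)

lemma card_tentSeg : Multiset.card (tentSeg c p q) = q + 1 - p := by
  simp [tentSeg]

lemma mem_tentSeg {k : ℕ} (hk : k ≤ 2 * c) :
    tent c k ∈ tentSeg c p q ↔ (p ≤ k ∧ k ≤ q) ∨ (p ≤ 2 * c - k ∧ 2 * c - k ≤ q) := by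
  simp only [tentSeg, Multiset.mem_map, Finset.mem_val, Finset.mem_Icc]
  constructor
  · rintro ⟨j, hj, hjk⟩
    rcases (tent_eq_tent_iff hk).1 hjk with rfl | rfl <;> simp [hj]
  · rintro (hk' | hk')
    · exact ⟨k, hk', rfl⟩
    · exact ⟨2 * c - k, hk', tent_two_mul_sub hk⟩

lemma tentSeg_reflect (hp : p ≤ 2 * c) (hq : q ≤ 2 * c) :
    tentSeg c (2 * c - q) (2 * c - p) = tentSeg c p q := by
  have hIcc : Icc (2 * c - q) (2 * c - p) = (Icc p q).image (2 * c - ·) := by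
    ext k
    simp only [Finset.mem_Icc, Finset.mem_image]
    exact ⟨fun hk => ⟨2 * c - k, by omega, by omega⟩, by rintro ⟨j, hj, rfl⟩; omega⟩
  have hinj : Set.InjOn (2 * c - ·) (Icc p q : Set ℕ) := by
    intro j hj k hk hjk
    simp only [Finset.coe_Icc, Set.mem_Icc] at hj hk hjk
    omega
  rw [tentSeg, hIcc, Finset.image_val_of_injOn hinj, Multiset.map_map, tentSeg]
  refine Multiset.map_congr rfl fun k hk => tent_two_mul_sub ?_
  simp only [Finset.mem_val, Finset.mem_Icc] at hk
  omega

lemma tentSeg_eq_tentSeg_iff (hp : 1 ≤ p) (hpq : p ≤ q) (hq : q < 2 * c)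
    (hp' : 1 ≤ p') (hpq' : p' ≤ q') (hq' : q' < 2 * c) :
    tentSeg c p q = tentSeg c p' q' ↔ (p = p' ∧ q = q') ∨ (p' = 2 * c - q ∧ q' = 2 * c - p) := by
  constructor
  · intro h
    have hcard := congrArg Multiset.card h
    rw [card_tentSeg, card_tentSeg] at hcard
    have hp₁ : tent c p ∈ tentSeg c p' q' := by rw [← h, mem_tentSeg (by omega)]; omega
    have hq₁ : tent c q ∈ tentSeg c p' q' := by rw [← h, mem_tentSeg (by omega)]; omega
    have hp₂ : tent c p' ∈ tentSeg c p q := by rw [h, mem_tentSeg (by omega)]; omega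
    have hq₂ : tent c q' ∈ tentSeg c p q := by rw [h, mem_tentSeg (by omega)]; omega
    rw [mem_tentSeg (by omega)] at hp₁ hq₁ hp₂ hq₂
    omega
  · rintro (⟨rfl, rfl⟩ | ⟨rfl, rfl⟩)
    · rfl
    · exact (tentSeg_reflect (by omega) (by omega)).symm

end Tent

section TwoRow

variable {a b j : ℕ}

lemma mem_tworow {p : ℕ × ℕ} :
    p ∈ tworow a b ↔ (p.1 = 1 ∧ 1 ≤ p.2 ∧ p.2 ≤ a) ∨ (p.1 = 2 ∧ 1 ≤ p.2 ∧ p.2 ≤ b) := by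
  obtain ⟨x, y⟩ := p
  simp [tworow]
  omega

lemma tworow_inj {a' b' : ℕ} (h : tworow a b = tworow a' b') : a = a' ∧ b = b' := by
  have h₁ := congrArg ((1, a) ∈ ·) h
  have h₂ := congrArg ((1, a') ∈ ·) h
  have h₃ := congrArg ((2, b) ∈ ·) h
  have h₄ := congrArg ((2, b') ∈ ·) h
  simp only [mem_tworow, eq_iff_iff, true_and, OfNat.ofNat_ne_one, OfNat.one_ne_ofNat,
    false_and, or_false, false_or, le_refl, and_true] at h₁ h₂ h₃ h₄
  omega

lemma hook_tworow_one_of_lt (hb : b < j) (ha : j ≤ a) :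
    hook (tworow a b) 1 j = {1} ×ˢ Icc j a := by
  ext ⟨x, y⟩
  simp [hook, mem_tworow]
  omega

lemma hook_tworow_one_of_le (hj : 1 ≤ j) (hb : j ≤ b) (hba : b ≤ a) :
    hook (tworow a b) 1 j = insert (2, j) ({1} ×ˢ Icc j a) := by
  ext ⟨x, y⟩
  simp [hook, mem_tworow]
  omega

lemma hook_tworow_two (hj : 1 ≤ j) (hb : j ≤ b) :
    hook (tworow a b) 2 j = {2} ×ˢ Icc j b := by
  ext ⟨x, y⟩
  simp [hook, mem_tworow]
  omega

lemma removeHook_tworow_one_of_lt (hb : b < j) (ha : j ≤ a) :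
    removeHook (tworow a b) 1 j = tworow (j - 1) b := by
  ext ⟨x, y⟩
  simp only [removeHook, hook_tworow_one_of_lt hb ha, Finset.mem_image, Finset.mem_sdiff,
    Finset.mem_product, Finset.mem_singleton, Finset.mem_Icc, mem_tworow, Prod.exists, shiftBox]
  constructor
  · rintro ⟨x', y', h, h'⟩
    split_ifs at h' <;> simp only [Prod.mk.injEq] at h' <;> omega
  · intro h
    exact ⟨x, y, by omega, by rw [if_neg (by omega)]⟩

lemma removeHook_tworow_one_of_le (hj : 1 ≤ j) (hb : j ≤ b) (hba : b ≤ a) :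
    removeHook (tworow a b) 1 j = tworow (b - 1) (j - 1) := by
  ext ⟨x, y⟩
  simp only [removeHook, hook_tworow_one_of_le hj hb hba, Finset.mem_image, Finset.mem_sdiff,
    Finset.mem_insert, Finset.mem_product, Finset.mem_singleton, Finset.mem_Icc, mem_tworow,
    Prod.exists, shiftBox, Prod.mk.injEq]
  constructor
  · rintro ⟨x', y', h, h'⟩
    split_ifs at h' <;> simp only [Prod.mk.injEq] at h' <;> omega
  · intro h
    by_cases hshift : x = 1 ∧ j ≤ y
    · exact ⟨2, y + 1, by omega, by rw [if_pos (by omega)]; simp only [Prod.mk.injEq]; omega⟩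
    · exact ⟨x, y, by omega, by rw [if_neg (by omega)]⟩

lemma removeHook_tworow_two (hj : 1 ≤ j) (hb : j ≤ b) :
    removeHook (tworow a b) 2 j = tworow a (j - 1) := by
  ext ⟨x, y⟩
  simp only [removeHook, hook_tworow_two hj hb, Finset.mem_image, Finset.mem_sdiff,
    Finset.mem_product, Finset.mem_singleton, Finset.mem_Icc, mem_tworow, Prod.exists, shiftBox]
  constructor
  · rintro ⟨x', y', h, h'⟩
    split_ifs at h' <;> simp only [Prod.mk.injEq] at h' <;> omega
  · intro h
    exact ⟨x, y, by omega, by rw [if_neg (by omega)]⟩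

end TwoRow

section Unimodal

variable {n' a b j : ℕ}

lemma unimodal_one (j : ℕ) : unimodal 2 (2 * n') (1, j) = tent (n' + 1) (j + 1) := by
  simp only [unimodal, tent]
  push_cast
  omega

lemma unimodal_two (j : ℕ) : unimodal 2 (2 * n') (2, j) = tent (n' + 1) j := by
  simp only [unimodal, tent]
  push_cast
  omega

lemma amul_row_one (j l : ℕ) :
    Amul 2 (2 * n') ({1} ×ˢ Icc j l) = tentSeg (n' + 1) (j + 1) (l + 1) := by
  rw [Amul, tentSeg, ← Finset.map_add_right_Icc, Finset.singleton_product]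
  simp only [Finset.map_val, Multiset.map_map]
  exact Multiset.map_congr rfl fun k _ => unimodal_one k

lemma amul_row_two (j l : ℕ) : Amul 2 (2 * n') ({2} ×ˢ Icc j l) = tentSeg (n' + 1) j l := by
  rw [Amul, tentSeg, Finset.singleton_product]
  simp only [Finset.map_val, Multiset.map_map]
  exact Multiset.map_congr rfl fun k _ => unimodal_two k

lemma amul_hook_tworow_one_of_lt (hb : b < j) (ha : j ≤ a) :
    Amul 2 (2 * n') (hook (tworow a b) 1 j) = tentSeg (n' + 1) (j + 1) (a + 1) := by
  rw [hook_tworow_one_of_lt hb ha, amul_row_one]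

lemma amul_hook_tworow_one_of_le (hj : 1 ≤ j) (hb : j ≤ b) (hba : b ≤ a) :
    Amul 2 (2 * n') (hook (tworow a b) 1 j) = tentSeg (n' + 1) j (a + 1) := by
  have hnotMem : (2, j) ∉ ({1} : Finset ℕ) ×ˢ Icc j a := by simp
  rw [hook_tworow_one_of_le hj hb hba, Amul, Finset.insert_val_of_notMem hnotMem,
    Multiset.map_cons, ← Amul, amul_row_one, unimodal_two, tentSeg, tentSeg,
    Finset.Icc_eq_cons_Ioc (by omega : j ≤ a + 1), Finset.cons_val, Multiset.map_cons,
    ← Finset.Icc_add_one_left_eq_Ioc]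

lemma amul_hook_tworow_two (hj : 1 ≤ j) (hb : j ≤ b) :
    Amul 2 (2 * n') (hook (tworow a b) 2 j) = tentSeg (n' + 1) j b := by
  rw [hook_tworow_two hj hb, amul_row_two]

end Unimodal

/-- The two-row diagram with beta-set `{x, y}`: box `(1, j)` sits at position `j + 1` and box
`(2, j)` at position `j`, so the rows end at positions `max x y` and `min x y`. -/
def beads (x y : ℕ) : Finset (ℕ × ℕ) := tworow (max x y - 1) (min x y)

section Beads

variable {n' x y r : ℕ}

lemma beads_comm (x y : ℕ) : beads x y = beads y x := by
  rw [beads, beads, max_comm, min_comm]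

lemma beads_of_lt (h : y < x) : beads x y = tworow (x - 1) y := by
  rw [beads, max_eq_left h.le, min_eq_right h.le]

lemma tworow_eq_beads {a b : ℕ} (h : b ≤ a) : tworow a b = beads (a + 1) b := by
  rw [beads_of_lt (Nat.lt_add_one_of_le h), Nat.add_sub_cancel]

lemma beads_eq_beads_iff {x' y' : ℕ} (hxy : x ≠ y) (hxy' : x' ≠ y') :
    beads x y = beads x' y' ↔ (x = x' ∧ y = y') ∨ (x = y' ∧ y = x') := by
  constructor
  · intro h
    have := tworow_inj h
    omega
  · rintro (⟨rfl, rfl⟩ | ⟨rfl, rfl⟩)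
    · rfl
    · exact beads_comm _ _

lemma exists_hook_beads (hxy : x ≠ y) (hr : r < x) (hry : r ≠ y) :
    ∃ i j, (i, j) ∈ beads x y ∧
      Amul 2 (2 * n') (hook (beads x y) i j) = tentSeg (n' + 1) (r + 1) x ∧
      removeHook (beads x y) i j = beads r y := by
  rcases lt_or_gt_of_ne hxy with hxy | hyx
  · rw [beads_comm, beads_of_lt hxy, beads_comm, beads_of_lt (hr.trans hxy)]
    exact ⟨2, r + 1, mem_tworow.2 (by omega), amul_hook_tworow_two (by omega) hr,
      removeHook_tworow_two (by omega) hr⟩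
  rw [beads_of_lt hyx]
  rcases lt_or_gt_of_ne hry with hry | hyr
  · rw [beads_comm, beads_of_lt hry]
    refine ⟨1, r + 1, mem_tworow.2 (by omega), ?_, ?_⟩
    · rw [amul_hook_tworow_one_of_le (by omega) hry (by omega), Nat.sub_add_cancel (by omega)]
    · exact removeHook_tworow_one_of_le (by omega) hry (by omega)
  · rw [beads_of_lt hyr]
    refine ⟨1, r, mem_tworow.2 (by omega), ?_, removeHook_tworow_one_of_lt hyr (by omega)⟩
    rw [amul_hook_tworow_one_of_lt hyr (by omega), Nat.sub_add_cancel (by omega)]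

lemma hook_beads_cases (hxy : x ≠ y) {i j : ℕ} (h : (i, j) ∈ beads x y) :
    ∃ r, (r < x ∧ r ≠ y ∧ Amul 2 (2 * n') (hook (beads x y) i j) = tentSeg (n' + 1) (r + 1) x ∧
        removeHook (beads x y) i j = beads r y) ∨
      (r < y ∧ r ≠ x ∧ Amul 2 (2 * n') (hook (beads x y) i j) = tentSeg (n' + 1) (r + 1) y ∧
        removeHook (beads x y) i j = beads x r) := by
  wlog hyx : y < x generalizing x y
  · rw [beads_comm] at h ⊢
    obtain ⟨r, hr⟩ := this hxy.symm h (by omega)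
    rw [beads_comm r, beads_comm y r] at hr
    exact ⟨r, hr.symm⟩
  rw [beads_of_lt hyx] at h ⊢
  rcases mem_tworow.1 h with ⟨rfl, hj, hjx⟩ | ⟨rfl, hj, hjy⟩
  · rcases lt_or_ge y j with hyj | hjy
    · refine ⟨j, Or.inl ⟨by omega, by omega, ?_, ?_⟩⟩
      · rw [amul_hook_tworow_one_of_lt hyj hjx, Nat.sub_add_cancel (by omega)]
      · rw [removeHook_tworow_one_of_lt hyj hjx, beads_of_lt hyj]
    · refine ⟨j - 1, Or.inl ⟨by omega, by omega, ?_, ?_⟩⟩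
      · rw [amul_hook_tworow_one_of_le hj hjy (by omega), Nat.sub_add_cancel hj,
          Nat.sub_add_cancel (by omega)]
      · rw [removeHook_tworow_one_of_le hj hjy (by omega), beads_comm, beads_of_lt (by omega)]
  · refine ⟨j - 1, Or.inr ⟨by omega, by omega, ?_, ?_⟩⟩
    · rw [amul_hook_tworow_two hj hjy, Nat.sub_add_cancel hj]
    · rw [removeHook_tworow_two hj hjy, beads_of_lt (by omega)]

end Beads

def FinishMove (m n : ℕ) (R : Finset (ℕ × ℕ)) (A : Multiset ℤ) (Y' : Finset (ℕ × ℕ)) : Prop :=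
  (Y' = R ∧ ¬∃ i j, (i, j) ∈ R ∧ Amul m n (hook R i j) = A) ∨
    ∃ i j, (i, j) ∈ R ∧ Amul m n (hook R i j) = A ∧ Y' = removeHook R i j

lemma move_iff_finishMove {m n : ℕ} {Y Y' : Finset (ℕ × ℕ)} :
    Move m n Y Y' ↔
      ∃ i j, (i, j) ∈ Y ∧ FinishMove m n (removeHook Y i j) (Amul m n (hook Y i j)) Y' :=
  Iff.rfl

/-- The new positions `(bead x, bead y)` after moving one of the beads `x ≠ y` to a lower free
position. -/
def beadSteps (x y : ℕ) : Set (ℕ × ℕ) :=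
  {p | (p.1 < x ∧ p.1 ≠ y ∧ p.2 = y) ∨ (p.1 = x ∧ p.2 < y ∧ p.2 ≠ x)}

def moveResult (n' x y : ℕ) (p : ℕ × ℕ) : Finset (ℕ × ℕ) :=
  if p.1 + p.2 = 2 * n' + 1 then beads (2 * n' + 1 - x) (2 * n' + 1 - y) else beads p.1 p.2

section Moves

variable {n' x y r : ℕ}

lemma moveResult_swap (r o : ℕ) : moveResult n' y x (r, o) = moveResult n' x y (o, r) := by
  simp only [moveResult, add_comm r o, beads_comm r o, beads_comm (2 * n' + 1 - y)]

lemma finishMove_beads_iff (hx : x ≤ 2 * n' + 1) (hy : y ≤ 2 * n' + 1) (hxy : x ≠ y)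
    (hr : r < x) (hry : r ≠ y) {Y' : Finset (ℕ × ℕ)} :
    FinishMove 2 (2 * n') (beads r y) (tentSeg (n' + 1) (r + 1) x) Y' ↔
      Y' = moveResult n' x y (r, y) := by
  have key : ∀ Z, (∃ i j, (i, j) ∈ beads r y ∧
      Amul 2 (2 * n') (hook (beads r y) i j) = tentSeg (n' + 1) (r + 1) x ∧
      Z = removeHook (beads r y) i j) ↔
        r + y = 2 * n' + 1 ∧ Z = beads (2 * n' + 1 - x) (2 * n' + 1 - y) := by
    intro Z
    constructor
    · rintro ⟨i, j, hij, hA, rfl⟩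
      obtain ⟨r', ⟨hr', -, hA', -⟩ | ⟨hr', -, hA', hR'⟩⟩ := hook_beads_cases hry hij
      · rw [hA', tentSeg_eq_tentSeg_iff (by omega) (by omega) (by omega) (by omega) (by omega)
          (by omega)] at hA
        omega
      · rw [hA', tentSeg_eq_tentSeg_iff (by omega) (by omega) (by omega) (by omega) (by omega)
          (by omega)] at hA
        rw [hR', beads_comm, show r' = 2 * n' + 1 - x by omega, show r = 2 * n' + 1 - y by omega]
        exact ⟨by omega, rfl⟩
    · rintro ⟨hsum, rfl⟩
      obtain ⟨i, j, hij, hA, hR⟩ :=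
        exists_hook_beads (n' := n') (x := y) (y := r) (r := 2 * n' + 1 - x) (Ne.symm hry)
          (by omega) (by omega)
      rw [beads_comm y r] at hij hA hR
      refine ⟨i, j, hij, ?_, ?_⟩
      · rw [hA, ← tentSeg_reflect (c := n' + 1) (p := r + 1) (q := x) (by omega) (by omega)]
        congr 1 <;> omega
      · rw [hR, show r = 2 * n' + 1 - y by omega]
  have hmatch : (∃ i j, (i, j) ∈ beads r y ∧
      Amul 2 (2 * n') (hook (beads r y) i j) = tentSeg (n' + 1) (r + 1) x) ↔
        r + y = 2 * n' + 1 :=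
    ⟨fun ⟨i, j, hij, hA⟩ => ((key _).1 ⟨i, j, hij, hA, rfl⟩).1,
      fun h => let ⟨i, j, hij, hA, _⟩ := (key _).2 ⟨h, rfl⟩; ⟨i, j, hij, hA⟩⟩
  rw [FinishMove, hmatch, key, moveResult]
  split_ifs <;> tauto

lemma opt_beads (hx : x ≤ 2 * n' + 1) (hy : y ≤ 2 * n' + 1) (hxy : x ≠ y) :
    Opt 2 (2 * n') (beads x y) = moveResult n' x y '' beadSteps x y := by
  ext Y'
  simp only [Opt, Set.mem_ofPred_eq, Set.mem_image, move_iff_finishMove]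
  constructor
  · rintro ⟨i, j, hij, hfin⟩
    obtain ⟨r, ⟨hr, hry, hA, hR⟩ | ⟨hr, hrx, hA, hR⟩⟩ := hook_beads_cases hxy hij
    · rw [hA, hR, finishMove_beads_iff hx hy hxy hr hry] at hfin
      exact ⟨(r, y), Or.inl ⟨hr, hry, rfl⟩, hfin.symm⟩
    · rw [hA, hR, beads_comm x r, finishMove_beads_iff hy hx hxy.symm hr hrx,
        moveResult_swap] at hfin
      exact ⟨(x, r), Or.inr ⟨rfl, hr, hrx⟩, hfin.symm⟩
  · rintro ⟨⟨r, o⟩, hp, rfl⟩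
    simp only [beadSteps, Set.mem_ofPred_eq] at hp
    rcases hp with ⟨hr, hry, rfl⟩ | ⟨rfl, hr, hrx⟩
    · obtain ⟨i, j, hij, hA, hR⟩ := exists_hook_beads (n' := n') hxy hr hry
      refine ⟨i, j, hij, ?_⟩
      rw [hA, hR, finishMove_beads_iff hx hy hxy hr hry]
    · obtain ⟨i, j, hij, hA, hR⟩ := exists_hook_beads (n' := n') hxy.symm hr hrx
      rw [beads_comm y] at hij hA hR
      refine ⟨i, j, hij, ?_⟩
      rw [hA, hR, finishMove_beads_iff hy hx hxy.symm hr hrx, moveResult_swap]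

end Moves

section Options

variable {n' l1 l2 x y : ℕ}

lemma OH_eq_image_beadSteps (h : l2 ≤ l1) :
    OH l1 l2 = (fun p => beads p.1 p.2) '' beadSteps (l1 + 1) l2 := by
  ext Y
  simp only [OH, beadSteps, Set.mem_union, Set.mem_ofPred_eq, Set.mem_image, Prod.exists]
  constructor
  · rintro ((⟨a, ha, ha', rfl⟩ | ⟨b, hb, rfl⟩) | ⟨a, ha, rfl⟩)
    · exact ⟨a + 1, l2, Or.inl ⟨by omega, by omega, rfl⟩, (tworow_eq_beads ha).symm⟩
    · exact ⟨l1 + 1, b, Or.inr ⟨rfl, hb, by omega⟩, (tworow_eq_beads (by omega)).symm⟩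
    · exact ⟨a, l2, Or.inl ⟨by omega, by omega, rfl⟩, by rw [beads_comm, beads_of_lt ha]⟩
  · rintro ⟨r, o, ⟨hr, hrl, rfl⟩ | ⟨rfl, ho, -⟩, rfl⟩
    · rcases lt_or_gt_of_ne hrl with hrl | hlr
      · exact Or.inr ⟨r, hrl, by rw [beads_comm, beads_of_lt hrl]⟩
      · exact Or.inl (Or.inl ⟨r - 1, by omega, by omega, beads_of_lt hlr⟩)
    · exact Or.inl (Or.inr ⟨o, ho, by rw [beads_of_lt (by omega), Nat.add_sub_cancel]⟩)

lemma exists_tworow_eq_beads_iff (hxy : x ≠ y) :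
    (∃ a b, b ≤ a ∧ a + b = 2 * n' ∧ beads x y = tworow a b) ↔ x + y = 2 * n' + 1 := by
  constructor
  · rintro ⟨a, b, hba, hs, h⟩
    rw [tworow_eq_beads hba, beads_eq_beads_iff hxy (by omega)] at h
    omega
  · intro hs
    rcases lt_or_gt_of_ne hxy with hxy | hyx
    · exact ⟨y - 1, x, by omega, by omega, by rw [beads_comm, beads_of_lt hxy]⟩
    · exact ⟨x - 1, y, by omega, by omega, beads_of_lt hyx⟩

lemma opt_tworow_of_lt (h21 : l2 ≤ l1) (h1n : l1 ≤ 2 * n') (hlt : l1 + l2 < 2 * n') :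
    Opt 2 (2 * n') (tworow l1 l2) = OH l1 l2 := by
  rw [tworow_eq_beads h21, opt_beads (by omega) (by omega) (by omega), OH_eq_image_beadSteps h21]
  refine Set.image_congr fun p hp => if_neg ?_
  simp only [beadSteps, Set.mem_ofPred_eq] at hp
  omega

lemma opt_tworow_of_gt (h21 : l2 ≤ l1) (h1n : l1 ≤ 2 * n') (hgt : 2 * n' < l1 + l2) :
    Opt 2 (2 * n') (tworow l1 l2) =
      (OH l1 l2 \ {Y | ∃ a b : ℕ, b ≤ a ∧ a + b = 2 * n' ∧ Y = tworow a b}) ∪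
        {tworow (2 * n' - l2) (2 * n' - l1)} := by
  have hreflect : tworow (2 * n' - l2) (2 * n' - l1) =
      beads (2 * n' + 1 - (l1 + 1)) (2 * n' + 1 - l2) := by
    rw [tworow_eq_beads (by omega), beads_comm]
    congr 1 <;> omega
  rw [tworow_eq_beads h21, opt_beads (by omega) (by omega) (by omega), OH_eq_image_beadSteps h21,
    hreflect]
  ext Y
  simp only [Set.mem_image, Set.mem_union, Set.mem_sdiff, Set.mem_ofPred_eq,
    Set.mem_singleton_iff, Prod.exists]
  constructor
  · rintro ⟨r, o, hp, rfl⟩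
    have hro : r ≠ o := by simp only [beadSteps, Set.mem_ofPred_eq] at hp; omega
    by_cases hs : r + o = 2 * n' + 1
    · exact Or.inr (if_pos hs)
    · rw [moveResult, if_neg hs]
      exact Or.inl ⟨⟨r, o, hp, rfl⟩, mt (exists_tworow_eq_beads_iff hro).1 hs⟩
  · rintro (⟨⟨r, o, hp, rfl⟩, hns⟩ | rfl)
    · have hro : r ≠ o := by simp only [beadSteps, Set.mem_ofPred_eq] at hp; omega
      exact ⟨r, o, hp, if_neg fun hs => hns ((exists_tworow_eq_beads_iff hro).2 hs)⟩
    · exact ⟨2 * n' + 1 - l2, l2, Or.inl ⟨by omega, by omega, rfl⟩, if_pos (by omega)⟩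

end Options

section Reach

variable {n' x y r : ℕ}

lemma rect_two_eq_beads (n : ℕ) : rect 2 n = beads (n + 1) n := by
  rw [← tworow_eq_beads le_rfl]
  ext ⟨i, j⟩
  simp only [rect, Finset.mem_product, Finset.mem_Icc, mem_tworow]
  omega

lemma Reach.beads_step (h : Reach 2 (2 * n') (beads x y)) (hx : x ≤ 2 * n' + 1)
    (hy : y ≤ 2 * n' + 1) (hxy : x ≠ y) (hr : r ≤ x) (hry : r ≠ y) (hs : r + y ≠ 2 * n' + 1) :
    Reach 2 (2 * n') (beads r y) := by
  rcases hr.eq_or_lt with rfl | hr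
  · exact h
  refine h.tail ?_
  change beads r y ∈ Opt 2 (2 * n') (beads x y)
  rw [opt_beads hx hy hxy]
  exact ⟨(r, y), Or.inl ⟨hr, hry, rfl⟩, if_neg hs⟩

lemma Reach.beads_reflect (h : Reach 2 (2 * n') (beads x y)) (hx : x ≤ 2 * n' + 1)
    (hy : y ≤ 2 * n' + 1) (hxy : x ≠ y) (hgt : 2 * n' + 1 < x + y) :
    Reach 2 (2 * n') (beads (2 * n' + 1 - x) (2 * n' + 1 - y)) := by
  refine h.tail ?_
  change _ ∈ Opt 2 (2 * n') (beads x y)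
  rw [opt_beads hx hy hxy]
  exact ⟨(2 * n' + 1 - y, y), Or.inl ⟨by omega, by omega, rfl⟩, if_pos (by omega)⟩

lemma reach_beads_of_gt (hyx : y < x) (hx : x ≤ 2 * n' + 1)
    (hgt : 2 * n' + 1 < x + y) : Reach 2 (2 * n') (beads x y) := by
  have hstart : Reach 2 (2 * n') (beads (2 * n') (2 * n' + 1)) := by
    rw [beads_comm, ← rect_two_eq_beads]
    exact Relation.ReflTransGen.refl
  have hy : Reach 2 (2 * n') (beads y (2 * n' + 1)) :=
    hstart.beads_step (by omega) le_rfl (by omega) (by omega) (by omega) (by omega)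
  rw [beads_comm] at hy
  exact hy.beads_step le_rfl (by omega) (by omega) hx (by omega) (by omega)

lemma reach_iff (hn' : 1 ≤ n') {Y : Finset (ℕ × ℕ)} :
    Reach 2 (2 * n') Y ↔ ∃ x y, x ≠ y ∧ x ≤ 2 * n' + 1 ∧ y ≤ 2 * n' + 1 ∧
      x + y ≠ 2 * n' + 1 ∧ Y = beads x y := by
  constructor
  · intro h
    induction h with
    | refl => exact ⟨2 * n' + 1, 2 * n', by omega, le_rfl, by omega, by omega, rect_two_eq_beads _⟩
    | tail _ hmove ih =>
      obtain ⟨x, y, hxy, hx, hy, -, rfl⟩ := ih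
      change _ ∈ Opt 2 (2 * n') (beads x y) at hmove
      rw [opt_beads hx hy hxy] at hmove
      obtain ⟨⟨r, o⟩, hp, rfl⟩ := hmove
      simp only [beadSteps, Set.mem_ofPred_eq] at hp
      rw [moveResult]
      split_ifs with hs
      · exact ⟨_, _, by omega, by omega, by omega, by omega, rfl⟩
      · exact ⟨r, o, by omega, by omega, by omega, hs, rfl⟩
  · rintro ⟨x, y, hxy, hx, hy, hs, rfl⟩
    wlog hyx : y < x generalizing x y
    · rw [beads_comm]
      exact this y x hxy.symm hy hx (by omega) (by omega)
    rcases lt_or_gt_of_ne hs with hlt | hgt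
    · have h := (reach_beads_of_gt (n' := n') (x := 2 * n' + 1 - y) (y := 2 * n' + 1 - x) (by omega)
        (by omega) (by omega)).beads_reflect (by omega) (by omega) (by omega) (by omega)
      rwa [Nat.sub_sub_self hy, Nat.sub_sub_self hx, beads_comm] at h
    · exact reach_beads_of_gt hyx hx hgt

end Reach

section YoungDiagram

variable {Y : Finset (ℕ × ℕ)}

lemma IsYD.exists_row_length (hY : IsYD Y) (i : ℕ) :
    ∃ a, ∀ j, 1 ≤ j → ((i, j) ∈ Y ↔ j ≤ a) := by
  set row := Y.filter (·.1 = i)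
  refine ⟨row.sup Prod.snd, fun j hj => ⟨fun h => ?_, fun h => ?_⟩⟩
  · have hrow : (i, j) ∈ row := Finset.mem_filter.2 ⟨h, rfl⟩
    exact Finset.le_sup (f := Prod.snd) hrow
  · have hne : row.Nonempty := by
      by_contra hrow
      rw [Finset.not_nonempty_iff_eq_empty.1 hrow, Finset.sup_empty, Nat.bot_eq_zero] at h
      omega
    obtain ⟨p, hp, hpa⟩ := Finset.exists_mem_eq_sup row hne Prod.snd
    obtain ⟨hpY, rfl⟩ := Finset.mem_filter.1 hp
    exact hY.2 p hpY _ (hY.1 p hpY).1 hj le_rfl (hpa ▸ h)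

lemma isYD_subset_rect_two_iff {n : ℕ} :
    IsYD Y ∧ Y ⊆ rect 2 n ↔ ∃ a b, b ≤ a ∧ a ≤ n ∧ Y = tworow a b := by
  have mem_rect : ∀ {p : ℕ × ℕ}, p ∈ rect 2 n ↔ 1 ≤ p.1 ∧ p.1 ≤ 2 ∧ 1 ≤ p.2 ∧ p.2 ≤ n := by
    simp [rect, and_assoc]
  constructor
  · rintro ⟨hY, hsub⟩
    obtain ⟨a, ha⟩ := hY.exists_row_length 1
    obtain ⟨b, hb⟩ := hY.exists_row_length 2
    have hba : b ≤ a := by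
      by_contra! hab
      have h2 := (hb (a + 1) (by omega)).2 (by omega)
      exact absurd ((ha (a + 1) (by omega)).1 (hY.2 _ h2 (1, a + 1) le_rfl (by omega) (by omega)
        le_rfl)) (by omega)
    have han : a ≤ n := by
      by_contra! han
      have := mem_rect.1 (hsub ((ha a (by omega)).2 le_rfl))
      omega
    refine ⟨a, b, hba, han, ?_⟩
    ext ⟨i, j⟩
    rw [mem_tworow]
    constructor
    · intro h
      have hij := mem_rect.1 (hsub h)
      obtain rfl | rfl : i = 1 ∨ i = 2 := by omega
      · exact Or.inl ⟨rfl, hij.2.2.1, (ha j hij.2.2.1).1 h⟩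
      · exact Or.inr ⟨rfl, hij.2.2.1, (hb j hij.2.2.1).1 h⟩
    · rintro (⟨rfl, hj, hja⟩ | ⟨rfl, hj, hjb⟩)
      · exact (ha j hj).2 hja
      · exact (hb j hj).2 hjb
  · rintro ⟨a, b, hba, han, rfl⟩
    refine ⟨⟨fun p hp => ?_, fun p hp q hq₁ hq₂ hq₁p hq₂p => ?_⟩, fun p hp => ?_⟩
    · rw [mem_tworow] at hp
      omega
    · rw [mem_tworow] at hp ⊢
      omega
    · rw [mem_tworow] at hp
      rw [mem_rect]
      omega

end YoungDiagram

theorem stmt13 (n' : ℕ) (hn' : 1 ≤ n') :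
    ({Y : Finset (ℕ × ℕ) | Reach 2 (2 * n') Y} =
      {Y | IsYD Y ∧ Y ⊆ rect 2 (2 * n')} \
        {Y | ∃ a b : ℕ, b ≤ a ∧ a + b = 2 * n' ∧ Y = tworow a b}) ∧
    (∀ l1 l2 : ℕ, l2 ≤ l1 → l1 ≤ 2 * n' →
      (l1 + l2 < 2 * n' → Opt 2 (2 * n') (tworow l1 l2) = OH l1 l2) ∧
      (2 * n' < l1 + l2 → Opt 2 (2 * n') (tworow l1 l2) =
        (OH l1 l2 \ {Y | ∃ a b : ℕ, b ≤ a ∧ a + b = 2 * n' ∧ Y = tworow a b}) ∪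
          {tworow (2 * n' - l2) (2 * n' - l1)})) := by
  refine ⟨?_, fun l1 l2 h21 h1n => ⟨opt_tworow_of_lt h21 h1n, opt_tworow_of_gt h21 h1n⟩⟩
  ext Y
  simp only [Set.mem_ofPred_eq, Set.mem_sdiff]
  rw [reach_iff hn', isYD_subset_rect_two_iff]
  constructor
  · rintro ⟨x, y, hxy, hx, hy, hs, rfl⟩
    exact ⟨⟨max x y - 1, min x y, by omega, by omega, rfl⟩,
      mt (exists_tworow_eq_beads_iff hxy).1 hs⟩
  · rintro ⟨⟨a, b, hba, ha, rfl⟩, hsym⟩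
    rw [tworow_eq_beads hba] at hsym ⊢
    exact ⟨a + 1, b, by omega, by omega, by omega,
      fun hs => hsym ((exists_tworow_eq_beads_iff (by omega)).2 hs), rfl⟩
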